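/- Let R be an algebra over the localization of the integers at a prime p (not necessarily commutative), and let x and y be commuting elements of R. If x - y is both torsion (annihilated by some positive integer) and nilpotent, then there exists N such that x^(p^N) = y^(p^N). -/

import Mathlib

/-- Hopkins–Smith Lemma 3.4 / Lemma 5.19:
If `R` is an algebra over `ℤ_(p)` (the integers localized at the prime `p`),
and `x, y ∈ R` commute, with `x - y` both torsion and nilpotent, then
`x ^ (p ^ N) = y ^ (p ^ N)` for some `N`. -/
theorem stmt0 (p : ℕ) (hp : p.Prime) (R : Type*) [Ring R]
    [hPrime : (Ideal.span {(p : ℤ)}).IsPrime]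
    [Algebra (Localization.AtPrime (Ideal.span {(p : ℤ)})) R]
    (x y : R) (hcomm : x * y = y * x)
    (htor : ∃ n : ℕ, 0 < n ∧ n • (x - y) = 0)
    (hnil : IsNilpotent (x - y)) :
    ∃ N : ℕ, x ^ (p ^ N) = y ^ (p ^ N) := by
  classical
  obtain ⟨n, hn, hnd⟩ := htor
  obtain ⟨K, hK⟩ := hnil
  set d := x - y with hd
  have hcd : Commute d y := Commute.sub_left hcomm (Commute.refl y)
  set Loc := Localization.AtPrime (Ideal.span {(p : ℤ)}) with hLoc
  set a := n.factorization p with ha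
  set m := ordCompl[p] n with hm
  -- The cofactor m is a unit in Loc
  have hmI : ((m : ℤ)) ∉ Ideal.span {(p : ℤ)} := by
    rw [Ideal.mem_span_singleton]
    intro hdvd
    exact Nat.not_dvd_ordCompl hp hn.ne' (by exact_mod_cast hdvd)
  have hu : IsUnit ((algebraMap ℤ Loc) (m : ℤ)) :=
    (IsLocalization.AtPrime.isUnit_to_map_iff Loc (Ideal.span {(p : ℤ)}) (m : ℤ)).mpr hmI
  have hmLoc : ((algebraMap ℤ Loc) (m : ℤ)) = ((m : ℕ) : Loc) := by
    simp
  -- p ^ a • d = 0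
  have hpa : (p ^ a) • d = 0 := by
    have hnm : p ^ a * m = n := Nat.ordProj_mul_ordCompl_eq_self n p
    have h1 : ((n : ℕ) : Loc) • d = 0 := by
      rw [Nat.cast_smul_eq_nsmul]; exact hnd
    have h2 : ((m : ℕ) : Loc) • (((p : Loc) ^ a) • d) = 0 := by
      rw [smul_smul, ← Nat.cast_pow, ← Nat.cast_mul, mul_comm m (p ^ a), hnm]
      exact h1
    have h4 : ((hu.unit⁻¹ : Locˣ) : Loc) * ((m : ℕ) : Loc) = 1 := by
      rw [← hmLoc]
      exact hu.unit.inv_mul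
    have h3 := congrArg (fun z => ((hu.unit⁻¹ : Locˣ) : Loc) • z) h2
    simp only [smul_smul, smul_zero] at h3
    rw [← mul_assoc, h4, one_mul] at h3
    rw [← Nat.cast_smul_eq_nsmul Loc, Nat.cast_pow]
    exact h3
  -- main computation
  refine ⟨a + K, ?_⟩
  have hx : x = d + y := by rw [hd]; abel
  set M := p ^ (a + K) with hM
  rw [hx, hcd.add_pow]
  rw [Finset.sum_eq_single 0]
  · simp
  · intro i hi hi0
    by_cases hiK : K ≤ i
    · have : d ^ i = 0 := by
        calc d ^ i = d ^ K * d ^ (i - K) := by rw [← pow_add, Nat.add_sub_cancel' hiK]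
          _ = 0 := by rw [hK, zero_mul]
      rw [this, zero_mul, zero_mul]
    · push_neg at hiK
      -- p ^ a ∣ M.choose i
      have hdvd : p ^ a ∣ M.choose i := by
        apply pow_dvd_of_le_emultiplicity
        have hiM : i ≤ M := by
          rw [Finset.mem_range] at hi; omega
        rw [hp.emultiplicity_choose_prime_pow hiM hi0]
        have hmult : multiplicity p i < K := by
          have h5 : p ^ multiplicity p i ∣ i := pow_multiplicity_dvd p i
          have h6 : p ^ multiplicity p i ≤ i :=
            Nat.le_of_dvd (Nat.pos_of_ne_zero hi0) h5
          have h7 : multiplicity p i < p ^ multiplicity p i :=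
            Nat.lt_pow_self hp.one_lt
          omega
        exact_mod_cast (by omega : a ≤ (a + K) - multiplicity p i)
      obtain ⟨c, hc⟩ := hdvd
      have hsm : d ^ i * y ^ (M - i) * ((M.choose i : ℕ) : R)
          = (M.choose i) • (d ^ i * y ^ (M - i)) := by
        rw [nsmul_eq_mul, (Nat.cast_commute (M.choose i) (d ^ i * y ^ (M - i))).eq]
      rw [hsm, hc, mul_comm, mul_smul]
      obtain ⟨j, hj⟩ : ∃ j, i = j + 1 := ⟨i - 1, by omega⟩
      have hz : (p ^ a) • (d ^ i * y ^ (M - i)) = 0 := by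
        rw [hj, pow_succ', mul_assoc, ← smul_mul_assoc, hpa, zero_mul]
      rw [hz, smul_zero]
  · intro h0
    simp at h0
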